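/- Under the log-exponential-power-law class conditions (h(y) = L(y)·y^ρ, ρ > 1, L twice differentiable, slowly varying, y·L'(y)/L(y) → 0, (y·L'(y)/L(y))' → 0, h strictly increasing to ∞ with h' > 0), let y†(n) solve h(y†(n)) = ln n and let q_c(n) = h'(y†(n)) − h''(y†(n))/h'(y†(n)). Then the critical moment grows like (ln n)^{1 − 1/ρ} up to slowly varying corrections; in particular, ln q_c(n) / ln ln n → 1 − 1/ρ as n → ∞. -/

import Mathlib

/-!
Let `E = y L'/L` be the elasticity of `L`. Since `u ↦ log L(eᵘ)` has derivative `E(eᵘ) → 0`,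
`log L(y) = o(log y)`. Moreover `h' = (ρ + E) L y^(ρ-1)` and
`h''/h' = E'/(ρ + E) + (ρ + E - 1)/y → 0`, so `q_c / (L y^(ρ-1)) → ρ`; hence
`log q_c(y) ~ (ρ - 1) log y` while `log h(y) ~ ρ log y`.
Evaluating at `y†(n) → ∞`, where `log h(y†(n)) = log log n`, gives the limit `(ρ - 1)/ρ`.
-/

open Filter Real Topology Set Asymptotics

theorem isLittleO_id_atTop_of_hasDerivAt {G G' : ℝ → ℝ}
    (hG : ∀ᶠ u in atTop, HasDerivAt G (G' u) u) (hG' : Tendsto G' atTop (𝓝 0)) :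
    G =o[atTop] id := by
  refine isLittleO_iff.2 fun c hc => ?_
  obtain ⟨u₀, hu₀⟩ := eventually_atTop.1
    (hG.and ((tendsto_zero_iff_norm_tendsto_zero.1 hG').eventually (ge_mem_nhds (half_pos hc))))
  have hlip : ∀ u ≥ u₀, ‖G u - G u₀‖ ≤ c / 2 * ‖u - u₀‖ :=
    fun u hu => (convex_Ici u₀).norm_image_sub_le_of_norm_hasDerivWithin_le
      (fun x hx => (hu₀ x hx).1.hasDerivWithinAt) (fun x hx => (hu₀ x hx).2) self_mem_Ici hu
  filter_upwards [eventually_ge_atTop u₀,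
    eventually_ge_atTop (2 * (‖G u₀‖ + c / 2 * ‖u₀‖) / c)] with u hu huK
  have hK : ‖G u₀‖ + c / 2 * ‖u₀‖ ≤ c / 2 * u := by rw [div_le_iff₀ hc] at huK; linarith
  have hu0 : 0 ≤ u := le_trans (by positivity) huK
  calc ‖G u‖ ≤ ‖G u₀‖ + ‖G u - G u₀‖ := norm_le_norm_add_norm_sub' _ _
    _ ≤ ‖G u₀‖ + c / 2 * (‖u‖ + ‖u₀‖) := by
        gcongr; exact (hlip u hu).trans (by gcongr; exact norm_sub_le _ _)
    _ ≤ c * ‖id u‖ := by rw [id, Real.norm_of_nonneg hu0]; linarith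

noncomputable def elasticity (L : ℝ → ℝ) (y : ℝ) : ℝ := y * deriv L y / L y

theorem tendsto_log_div_log_of_tendsto_elasticity {L : ℝ → ℝ}
    (hLdiff : ∀ᶠ y in atTop, DifferentiableAt ℝ L y) (hL0 : ∀ᶠ y in atTop, L y ≠ 0)
    (hE : Tendsto (elasticity L) atTop (𝓝 0)) :
    Tendsto (fun y => log (L y) / log y) atTop (𝓝 0) := by
  rw [← tendsto_comp_exp_atTop]
  simp only [log_exp]
  refine (isLittleO_id_atTop_of_hasDerivAt ?_ (hE.comp tendsto_exp_atTop)).tendsto_div_nhds_zero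
  filter_upwards [tendsto_exp_atTop.eventually (hLdiff.and hL0)] with u ⟨hdiff, hne⟩
  refine ((hdiff.hasDerivAt.comp u (hasDerivAt_exp u)).log hne).congr_deriv ?_
  simp only [Function.comp_apply, elasticity, mul_comm]

theorem tendsto_log_mul_rpow_div_log {L : ℝ → ℝ}
    (hL : Tendsto (fun y => log (L y) / log y) atTop (𝓝 0)) (hL0 : ∀ᶠ y in atTop, L y ≠ 0) (s : ℝ) :
    Tendsto (fun y => log (L y * y ^ s) / log y) atTop (𝓝 s) := by
  have h := hL.add_const s
  rw [zero_add] at h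
  refine h.congr' ?_
  filter_upwards [hL0, eventually_gt_atTop 1] with y hne hy
  rw [log_mul hne (rpow_pos_of_pos (by linarith) s).ne', log_rpow (by linarith), add_div,
    mul_div_cancel_right₀ _ (log_pos hy).ne']

theorem tendsto_log_div_log_of_tendsto_div {f g : ℝ → ℝ} {s c : ℝ}
    (hf : Tendsto (fun y => log (f y) / log y) atTop (𝓝 s))
    (hgf : Tendsto (fun y => g y / f y) atTop (𝓝 c)) (hc : c ≠ 0) :
    Tendsto (fun y => log (g y) / log y) atTop (𝓝 s) := by
  rw [← zero_add s]
  refine (((hgf.log hc).div_atTop tendsto_log_atTop).add hf).congr' ?_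
  filter_upwards [hgf.eventually_ne hc] with y hne
  have hf0 : f y ≠ 0 := fun h => hne (by simp [h])
  rw [← add_div, ← log_mul hne hf0, div_mul_cancel₀ _ hf0]

theorem tendsto_atTop_of_tendsto_log_div_log {f : ℝ → ℝ} {s : ℝ} (hs : 0 < s)
    (hf : Tendsto (fun y => log (f y) / log y) atTop (𝓝 s)) (hpos : ∀ᶠ y in atTop, 0 < f y) :
    Tendsto f atTop atTop := by
  have hlog : Tendsto (fun y => log (f y) / log y * log y) atTop atTop :=
    hf.pos_mul_atTop hs tendsto_log_atTop
  refine (tendsto_exp_atTop.comp hlog).congr' ?_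
  filter_upwards [hpos, eventually_gt_atTop 1] with y hfy hy
  rw [Function.comp_apply, div_mul_cancel₀ _ (log_pos hy).ne', exp_log hfy]

theorem tendsto_atTop_of_monotoneOn_comp {α : Type*} {l : Filter α} {f : ℝ → ℝ} {u : α → ℝ}
    (hf : MonotoneOn f (Ioi 0)) (hu : ∀ᶠ n in l, 0 < u n) (hfu : Tendsto (f ∘ u) l atTop) :
    Tendsto u l atTop := by
  refine tendsto_atTop.2 fun M => ?_
  filter_upwards [hu, hfu.eventually_gt_atTop (f (max M 1))] with n hn hlt
  by_contra! hnM
  exact hlt.not_ge (hf hn (lt_of_lt_of_le one_pos (le_max_right M 1))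
    (hnM.le.trans (le_max_left M 1)))

theorem hasDerivAt_mul_rpow {L : ℝ → ℝ} {y : ℝ} (hy : 0 < y) (hL : DifferentiableAt ℝ L y)
    (hL0 : L y ≠ 0) (s : ℝ) :
    HasDerivAt (fun x => L x * x ^ s) ((s + elasticity L y) * (L y * y ^ (s - 1))) y := by
  refine (hL.hasDerivAt.mul (hasDerivAt_rpow_const (Or.inl hy.ne'))).congr_deriv ?_
  rw [elasticity, rpow_sub_one hy.ne']
  field_simp
  ring

section RegularlyVarying

variable {L h : ℝ → ℝ} {ρ y : ℝ} (hLpos : ∀ y > 0, 0 < L y)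
  (hLdiff : ∀ y > 0, DifferentiableAt ℝ L y) (hh : ∀ y > 0, h y = L y * y ^ ρ)
include hLpos hLdiff hh

theorem hasDerivAt_of_eqOn_mul_rpow (hy : 0 < y) :
    HasDerivAt h ((ρ + elasticity L y) * (L y * y ^ (ρ - 1))) y :=
  (hasDerivAt_mul_rpow hy (hLdiff y hy) (hLpos y hy).ne' ρ).congr_of_eventuallyEq
    (eventually_of_mem (Ioi_mem_nhds hy) hh)

theorem deriv_deriv_div_deriv_of_eqOn_mul_rpow
    (hLdiff2 : ∀ y > 0, DifferentiableAt ℝ (deriv L) y) (hy : 0 < y)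
    (hρE : ρ + elasticity L y ≠ 0) :
    deriv (deriv h) y / deriv h y =
      deriv (elasticity L) y / (ρ + elasticity L y) + (ρ + elasticity L y - 1) / y := by
  have hE : DifferentiableAt ℝ (elasticity L) y :=
    (differentiableAt_id.mul (hLdiff2 y hy)).div (hLdiff y hy) (hLpos y hy).ne'
  have hderiv : deriv h =ᶠ[𝓝 y] fun x => (ρ + elasticity L x) * (L x * x ^ (ρ - 1)) := by
    filter_upwards [Ioi_mem_nhds hy] with x hx
    exact (hasDerivAt_of_eqOn_mul_rpow hLpos hLdiff hh hx).deriv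
  have hderiv' : HasDerivAt (fun x => (ρ + elasticity L x) * (L x * x ^ (ρ - 1)))
      (deriv (elasticity L) y * (L y * y ^ (ρ - 1)) +
        (ρ + elasticity L y) * ((ρ - 1 + elasticity L y) * (L y * y ^ (ρ - 1 - 1)))) y :=
    (hE.hasDerivAt.const_add ρ).mul
      (hasDerivAt_mul_rpow hy (hLdiff y hy) (hLpos y hy).ne' (ρ - 1))
  rw [hderiv.deriv_eq, hderiv'.deriv, (hasDerivAt_of_eqOn_mul_rpow hLpos hLdiff hh hy).deriv,
    rpow_sub_one hy.ne' (ρ - 1)]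
  have hL0 := (hLpos y hy).ne'
  have hy0 : y ^ (ρ - 1) ≠ 0 := (rpow_pos_of_pos hy _).ne'
  field_simp
  ring

noncomputable def criticalMoment (h : ℝ → ℝ) (y : ℝ) : ℝ :=
  deriv h y - deriv (deriv h) y / deriv h y

theorem tendsto_log_criticalMoment_div_log (hρ : 1 < ρ)
    (hLdiff2 : ∀ y > 0, DifferentiableAt ℝ (deriv L) y)
    (hL1 : Tendsto (elasticity L) atTop (𝓝 0))
    (hL2 : Tendsto (deriv (elasticity L)) atTop (𝓝 0)) :
    Tendsto (fun y => log (criticalMoment h y) / log (h y)) atTop (𝓝 (1 - 1 / ρ)) := by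
  have hρ0 : 0 < ρ := by linarith
  have hL0 : ∀ᶠ y in atTop, L y ≠ 0 := (eventually_gt_atTop 0).mono fun y hy => (hLpos y hy).ne'
  have hlogL := tendsto_log_div_log_of_tendsto_elasticity
    ((eventually_gt_atTop 0).mono hLdiff) hL0 hL1
  have hP := tendsto_log_mul_rpow_div_log hlogL hL0 (ρ - 1)
  have hPtop : Tendsto (fun y => L y * y ^ (ρ - 1)) atTop atTop :=
    tendsto_atTop_of_tendsto_log_div_log (by linarith) hP <| by
      filter_upwards [eventually_gt_atTop 0] with y hy
      exact mul_pos (hLpos y hy) (rpow_pos_of_pos hy _)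
  have hρE : Tendsto (fun y => ρ + elasticity L y) atTop (𝓝 ρ) := by
    simpa using hL1.const_add ρ
  have hB : Tendsto (fun y => deriv (deriv h) y / deriv h y) atTop (𝓝 0) := by
    have hlim : Tendsto (fun y => deriv (elasticity L) y / (ρ + elasticity L y) +
        (ρ + elasticity L y - 1) / y) atTop (𝓝 (0 / ρ + 0)) :=
      (hL2.div hρE hρ0.ne').add ((hρE.sub_const 1).div_atTop tendsto_id)
    rw [zero_div, zero_add] at hlim
    refine hlim.congr' ?_
    filter_upwards [eventually_gt_atTop 0, hρE.eventually_ne hρ0.ne'] with y hy hne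
    exact (deriv_deriv_div_deriv_of_eqOn_mul_rpow hLpos hLdiff hh hLdiff2 hy hne).symm
  have hq : Tendsto (fun y => log (criticalMoment h y) / log y) atTop (𝓝 (ρ - 1)) := by
    refine tendsto_log_div_log_of_tendsto_div hP (c := ρ) ?_ hρ0.ne'
    have hlim := hρE.sub (hB.div_atTop hPtop)
    rw [sub_zero] at hlim
    refine hlim.congr' ?_
    filter_upwards [eventually_gt_atTop 0] with y hy
    have hP0 : L y * y ^ (ρ - 1) ≠ 0 := (mul_pos (hLpos y hy) (rpow_pos_of_pos hy _)).ne'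
    rw [criticalMoment, (hasDerivAt_of_eqOn_mul_rpow hLpos hLdiff hh hy).deriv, sub_div,
      mul_div_cancel_right₀ _ hP0]
  have hlogh : Tendsto (fun y => log (h y) / log y) atTop (𝓝 ρ) := by
    refine (tendsto_log_mul_rpow_div_log hlogL hL0 ρ).congr' ?_
    filter_upwards [eventually_gt_atTop 0] with y hy
    rw [hh y hy]
  have hlim := hq.div hlogh hρ0.ne'
  rw [sub_div, div_self hρ0.ne'] at hlim
  refine hlim.congr' ?_
  filter_upwards [eventually_gt_atTop 1] with y hy
  exact div_div_div_cancel_right₀ (log_pos hy).ne' _ _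

end RegularlyVarying

theorem stmt10_general (ρ : ℝ) (hρ : 1 < ρ) (L : ℝ → ℝ)
    (hLpos : ∀ y > (0:ℝ), 0 < L y)
    (hLdiff : ∀ y > (0:ℝ), DifferentiableAt ℝ L y)
    (hLdiff2 : ∀ y > (0:ℝ), DifferentiableAt ℝ (deriv L) y)
    (hL1 : Tendsto (fun y => y * deriv L y / L y) atTop (nhds 0))
    (hL2 : Tendsto (deriv fun y => y * deriv L y / L y) atTop (nhds 0))
    (h : ℝ → ℝ) (hh : ∀ y > (0:ℝ), h y = L y * y ^ ρ)
    (hmono : StrictMonoOn h (Set.Ioi 0))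
    (ydag : ℕ → ℝ) (hydag_pos : ∀ n ≥ 2, 0 < ydag n)
    (hydag : ∀ n ≥ 2, h (ydag n) = Real.log n)
    (qc : ℕ → ℝ)
    (hqc : ∀ n ≥ 2, qc n =
      deriv h (ydag n) - deriv (deriv h) (ydag n) / deriv h (ydag n)) :
    Tendsto (fun n => Real.log (qc n) / Real.log (Real.log n)) atTop
      (nhds (1 - 1/ρ)) := by
  have hhy : Tendsto (h ∘ ydag) atTop atTop := by
    refine (tendsto_log_atTop.comp tendsto_natCast_atTop_atTop).congr' ?_
    filter_upwards [eventually_ge_atTop 2] with n hn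
    exact (hydag n hn).symm
  have hytop : Tendsto ydag atTop atTop := tendsto_atTop_of_monotoneOn_comp hmono.monotoneOn
    ((eventually_ge_atTop 2).mono hydag_pos) hhy
  refine ((tendsto_log_criticalMoment_div_log hLpos hLdiff hh hρ hLdiff2 hL1 hL2).comp
    hytop).congr' ?_
  filter_upwards [eventually_ge_atTop 2] with n hn
  rw [Function.comp_apply, hydag n hn, hqc n hn, criticalMoment]

/-- The critical moment `q_c(n) = h'(y†(n)) - h''(y†(n))/h'(y†(n))`
grows like `(ln n)^(1 - 1/ρ)` up to slowly varying corrections: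
`ln q_c(n) / ln ln n → 1 - 1/ρ` as `n → ∞`. -/
theorem stmt10 (ρ : ℝ) (hρ : 1 < ρ) (L : ℝ → ℝ)
    (hLpos : ∀ y > (0:ℝ), 0 < L y)
    (hLdiff : ∀ y > (0:ℝ), DifferentiableAt ℝ L y)
    (hLdiff2 : ∀ y > (0:ℝ), DifferentiableAt ℝ (deriv L) y)
    (hSV : ∀ t > (0:ℝ), Tendsto (fun y => L (t * y) / L y) atTop (nhds 1))
    (hL1 : Tendsto (fun y => y * deriv L y / L y) atTop (nhds 0))
    (hL2 : Tendsto (deriv fun y => y * deriv L y / L y) atTop (nhds 0))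
    (h : ℝ → ℝ) (hh : ∀ y > (0:ℝ), h y = L y * y ^ ρ)
    (hmono : StrictMonoOn h (Set.Ioi 0)) (htop : Tendsto h atTop atTop)
    (hh' : ∀ y > (0:ℝ), 0 < deriv h y)
    (ydag : ℕ → ℝ) (hydag_pos : ∀ n ≥ 2, 0 < ydag n)
    (hydag : ∀ n ≥ 2, h (ydag n) = Real.log n)
    (qc : ℕ → ℝ)
    (hqc : ∀ n ≥ 2, qc n =
      deriv h (ydag n) - deriv (deriv h) (ydag n) / deriv h (ydag n)) :
    Tendsto (fun n => Real.log (qc n) / Real.log (Real.log n)) atTop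
      (nhds (1 - 1/ρ)) :=
  stmt10_general ρ hρ L hLpos hLdiff hLdiff2 hL1 hL2 h hh hmono ydag hydag_pos hydag qc hqc
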